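/- arXiv:1707.06664 — 3 statements merged into one kernel-verified Lean document; each statement's English description precedes it below -/
import Mathlib

section
/- Let F be a field, Δ > 1 a real, n, D, m naturals with D ≤ n, and M ∈ F^{m×n} a matrix. Suppose there exists a decoder g : F^m → ℝ such that for every x ∈ F^n with 1 ≤ ‖x‖₀ ≤ D, one has ‖x‖₀/Δ ≤ g(Mx) ≤ Δ·‖x‖₀ (where Mx is the usual matrix-vector product). Then the kernel {v ∈ F^n : Mv = 0} is a (Δ,D)-distinguishing subspace of F^n; consequently, rank(M) ≥ n − D₀, where D₀ is the maximum dimension of a (Δ,D)-distinguishing linear subspace of F^n. -/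
/-- The sparsity (number of nonzero entries) of a vector. -/
noncomputable def sparsity {F : Type*} [Zero F] {n : ℕ} (x : Fin n → F) : ℕ :=
  Set.ncard {i | x i ≠ 0}

/-- A linear subspace `V ⊆ Fⁿ` is `(Δ,D)`-distinguishing if any two vectors in the same
coset of `V`, both of sparsity at most `D` (and at least `1`), differ in sparsity by a
factor of at most `Δ²`. -/
def Distinguishing (F : Type*) [Field F] {n : ℕ} (Δ : ℝ) (D : ℕ)
    (V : Submodule F (Fin n → F)) : Prop :=
  ∀ x y : Fin n → F, x - y ∈ V → 1 ≤ sparsity x → sparsity x ≤ sparsity y →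
    sparsity y ≤ D → (sparsity y : ℝ) ≤ Δ ^ 2 * (sparsity x : ℝ)

/-- If `M ∈ F^{m×n}` admits a decoder `Δ`-approximating the sparsity of every vector of
sparsity between `1` and `D` from the linear measurements `M x`, then the kernel of `M`
is a `(Δ,D)`-distinguishing subspace; consequently `rank M ≥ n − D₀`, where `D₀` is the
maximum dimension of a `(Δ,D)`-distinguishing subspace of `Fⁿ`. -/
theorem linear_lb_rank (F : Type*) [Field F] [DecidableEq F] (Δ : ℝ) (hΔ : 1 < Δ)
    (n D m : ℕ) (hD : D ≤ n) (M : Matrix (Fin m) (Fin n) F)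
    (hdec : ∃ g : (Fin m → F) → ℝ,
      ∀ x : Fin n → F, 1 ≤ sparsity x → sparsity x ≤ D →
        (sparsity x : ℝ) / Δ ≤ g (M.mulVec x) ∧ g (M.mulVec x) ≤ Δ * (sparsity x : ℝ)) :
    Distinguishing F Δ D (LinearMap.ker M.mulVecLin) ∧
    n - sSup {d : ℕ | ∃ V : Submodule F (Fin n → F),
      Distinguishing F Δ D V ∧ Module.finrank F V = d} ≤ M.rank := by
  obtain ⟨g, hg⟩ := hdec
  have hΔ0 : (0 : ℝ) < Δ := lt_trans one_pos hΔ
  have hdist : Distinguishing F Δ D (LinearMap.ker M.mulVecLin) := by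
    intro x y hxy hx1 hxy' hyD
    have hMx : M.mulVec x = M.mulVec y := by
      rw [LinearMap.mem_ker] at hxy
      have h2 : M.mulVecLin x - M.mulVecLin y = 0 := by rw [← map_sub]; exact hxy
      simpa [Matrix.mulVecLin_apply] using sub_eq_zero.mp h2
    have hx := hg x hx1 (le_trans hxy' hyD)
    have hy := hg y (le_trans hx1 hxy') hyD
    rw [hMx] at hx
    have h3 : (sparsity y : ℝ) / Δ ≤ Δ * (sparsity x : ℝ) := le_trans hy.1 hx.2
    rw [div_le_iff₀ hΔ0] at h3
    nlinarith [h3]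
  refine ⟨hdist, ?_⟩
  set S := {d : ℕ | ∃ V : Submodule F (Fin n → F),
      Distinguishing F Δ D V ∧ Module.finrank F V = d} with hS
  have hmem : Module.finrank F (LinearMap.ker M.mulVecLin) ∈ S :=
    ⟨_, hdist, rfl⟩
  have hbdd : BddAbove S := by
    refine ⟨n, fun d hd => ?_⟩
    obtain ⟨V, _, hV⟩ := hd
    calc d = Module.finrank F V := hV.symm
      _ ≤ Module.finrank F (Fin n → F) := Submodule.finrank_le V
      _ = n := Module.finrank_fin_fun F
  have hle : Module.finrank F (LinearMap.ker M.mulVecLin) ≤ sSup S :=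
    le_csSup hbdd hmem
  have hrank : M.rank + Module.finrank F (LinearMap.ker M.mulVecLin) = n := by
    rw [Matrix.rank]
    rw [LinearMap.finrank_range_add_finrank_ker M.mulVecLin]
    exact Module.finrank_fin_fun F
  omega
end

section
/- Let D, n be naturals with 1 ≤ D and 2D ≤ n. Then there exists a matrix M ∈ ℝ^{2D×n} such that for all x, y ∈ ℝ^n with ‖x‖₀ ≤ D and ‖y‖₀ ≤ D, if Mx = My then x = y; in particular there exists a decoder g : ℝ^{2D} → ℕ with g(Mx) = ‖x‖₀ for every x ∈ ℝ^n with ‖x‖₀ ≤ D. -/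
/-- Key kernel lemma: the power matrix `M i j = j ^ i` has no `2D`-sparse nonzero
vectors in its kernel. -/
lemma sparse_kernel_trivial (D n : ℕ) (z : Fin n → ℝ)
    (hz : sparsity z ≤ 2 * D)
    (h0 : ∀ i : Fin (2 * D), ∑ j : Fin n, ((j : ℕ) : ℝ) ^ (i : ℕ) * z j = 0) :
    z = 0 := by
  classical
  set s : Finset (Fin n) := {i | z i ≠ 0}.toFinset with hs
  have hcard : s.card ≤ 2 * D := by
    have h1 : sparsity z = s.card := by
      rw [sparsity, hs, Set.ncard_eq_toFinset_card']
    omega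
  set e : Fin s.card → Fin n := fun k => (s.orderIsoOfFin rfl k : Fin n) with he
  have he_inj : Function.Injective e := fun a b hab => by
    have := (s.orderIsoOfFin rfl).injective (Subtype.ext hab)
    exact this
  set u : Fin s.card → ℝ := fun k => ((e k : ℕ) : ℝ) with hu
  have hu_inj : Function.Injective u := fun a b hab =>
    he_inj (Fin.ext (Nat.cast_injective hab))
  set w : Fin s.card → ℝ := fun k => z (e k) with hw
  have hsum : ∀ m : ℕ, ∑ k : Fin s.card, w k * u k ^ m = ∑ j : Fin n, ((j : ℕ) : ℝ) ^ m * z j := by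
    intro m
    have h2 : ∑ j ∈ s, ((j : ℕ) : ℝ) ^ m * z j = ∑ j : Fin n, ((j : ℕ) : ℝ) ^ m * z j := by
      apply Finset.sum_subset (Finset.subset_univ s)
      intro j _ hj
      have : z j = 0 := by
        by_contra hc
        exact hj (by simp [hs, hc])
      simp [this]
    rw [← h2]
    rw [← Finset.sum_coe_sort s (fun j => ((j : ℕ) : ℝ) ^ m * z j)]
    rw [← Equiv.sum_comp (s.orderIsoOfFin rfl).toEquiv
      (fun a : s => (((a : Fin n) : ℕ) : ℝ) ^ m * z a)]
    apply Finset.sum_congr rfl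
    intro k _
    exact mul_comm _ _
  have hw0 : w = 0 := by
    apply Matrix.eq_zero_of_forall_pow_sum_mul_pow_eq_zero hu_inj
    intro i
    rw [hsum]
    exact h0 ⟨i, lt_of_lt_of_le i.2 hcard⟩
  funext j
  show z j = 0
  by_contra hj
  have hjs : j ∈ s := by simp [hs, hj]
  obtain ⟨k, hk⟩ := (s.orderIsoOfFin rfl).surjective ⟨j, hjs⟩
  have : w k = z j := by
    simp only [hw, he, hk]
  rw [hw0] at this
  exact hj (by simpa using this.symm)

/-- Exact identification of `D`-sparse real vectors from `2D` linear measurements: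
there is a matrix `M ∈ ℝ^{2D×n}` injective on vectors of sparsity at most `D`; in
particular there is a decoder recovering the sparsity exactly. -/
theorem real_exact_recovery (D n : ℕ) (hD : 1 ≤ D) (hn : 2 * D ≤ n) :
    ∃ M : Matrix (Fin (2 * D)) (Fin n) ℝ,
      (∀ x y : Fin n → ℝ, sparsity x ≤ D → sparsity y ≤ D →
        M.mulVec x = M.mulVec y → x = y) ∧
      ∃ g : (Fin (2 * D) → ℝ) → ℕ,
        ∀ x : Fin n → ℝ, sparsity x ≤ D → g (M.mulVec x) = sparsity x := by
  classical
  set M : Matrix (Fin (2 * D)) (Fin n) ℝ :=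
    Matrix.of fun i j => ((j : ℕ) : ℝ) ^ (i : ℕ) with hM
  have hinj : ∀ x y : Fin n → ℝ, sparsity x ≤ D → sparsity y ≤ D →
      M.mulVec x = M.mulVec y → x = y := by
    intro x y hx hy hxy
    have hzs : sparsity (x - y) ≤ 2 * D := by
      have hsub : {i | (x - y) i ≠ 0} ⊆ {i | x i ≠ 0} ∪ {i | y i ≠ 0} := by
        intro i hi
        by_contra hc
        simp only [Set.mem_union, Set.mem_setOf_eq, not_or, not_not] at hc
        exact hi (by simp [hc.1, hc.2])
      calc sparsity (x - y) ≤ ({i | x i ≠ 0} ∪ {i | y i ≠ 0}).ncard :=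
            Set.ncard_le_ncard hsub (Set.toFinite _)
        _ ≤ sparsity x + sparsity y := Set.ncard_union_le _ _
        _ ≤ 2 * D := by omega
    have h0 : ∀ i : Fin (2 * D), ∑ j : Fin n, ((j : ℕ) : ℝ) ^ (i : ℕ) * (x - y) j = 0 := by
      intro i
      have := congrFun hxy i
      simp only [hM, Matrix.mulVec, dotProduct, Matrix.of_apply] at this
      simp only [Pi.sub_apply, mul_sub, Finset.sum_sub_distrib, this, sub_self]
    have := sparse_kernel_trivial D n (x - y) hzs h0
    funext j
    have := congrFun this j
    simp only [Pi.sub_apply, Pi.zero_apply, sub_eq_zero] at this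
    exact this
  refine ⟨M, hinj, ?_⟩
  refine ⟨fun v => if h : ∃ x : Fin n → ℝ, sparsity x ≤ D ∧ M.mulVec x = v
    then sparsity h.choose else 0, ?_⟩
  intro x hx
  have h : ∃ x' : Fin n → ℝ, sparsity x' ≤ D ∧ M.mulVec x' = M.mulVec x := ⟨x, hx, rfl⟩
  simp only [dif_pos h]
  have hc := h.choose_spec
  rw [hinj h.choose x hc.1 hx hc.2]
end

section
/- Let F be a finite field with q = |F| elements, and let n, D be naturals with D ≥ 1 and (2D+1)/n ≤ 1 − 1/q. Then there exist a natural m with m ≤ ⌈n·H_q((2D+1)/n)⌉ and a matrix M ∈ F^{m×n} such that every nonzero vector v in the kernel of M satisfies ‖v‖₀ ≥ 2D + 1 (and hence, for every real Δ > 1, M allows Δ-approximation of the sparsity of every vector of sparsity at most D from the linear measurements Mx, since Mx = My with ‖x‖₀, ‖y‖₀ ≤ D forces x = y). -/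
/-- The `q`-ary entropy function
`H_q(x) = x·log_q(q−1) − x·log_q(x) − (1−x)·log_q(1−x)`. -/
noncomputable def qaryEntropy (q : ℕ) (x : ℝ) : ℝ :=
  x * Real.logb q ((q : ℝ) - 1) - x * Real.logb q x - (1 - x) * Real.logb q (1 - x)

/-!
Gilbert–Varshamov by the union bound. For a fixed `v ≠ 0` the map `M ↦ M v` from `m × n`
matrices onto `F^m` is linear and surjective, so exactly `q^(nm - m)` matrices kill `v`. The
nonzero vectors of weight `< k = 2D+1` are fewer than the Hamming ball of radius `k`, whose volume
`∑_{i ≤ k} C(n,i) (q-1)^i` is at most `q^(n H_q(k/n))` when `δ = k/n ≤ 1 - 1/q`: multiplied by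
`δ^k (1-δ)^(n-k) = (q-1)^k q^(-n H_q(δ))`, each term is at most `(q-1)^k` times the binomial
probability `C(n,i) δ^i (1-δ)^(n-i)`, because `δ ≤ (q-1)(1-δ)`. Hence for `m = ⌈n H_q(k/n)⌉` some
`M` kills no nonzero vector of weight `< k`, and `M x = M y` with `‖x‖₀, ‖y‖₀ ≤ D` forces `x = y`
since `‖x - y‖₀ ≤ 2D`.
-/

open Finset Matrix

section HammingBall

variable {ι β : Type*} [Fintype ι] [DecidableEq ι] [Fintype β] [DecidableEq β] [Zero β]

theorem card_filter_support_eq (s : Finset ι) :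
    #{x : ι → β | ({i | x i ≠ 0} : Finset ι) = s} = (Fintype.card β - 1) ^ #s := by
  have hpi : ({x : ι → β | ({i | x i ≠ 0} : Finset ι) = s} : Finset (ι → β))
      = Fintype.piFinset fun i => if i ∈ s then ({0}ᶜ : Finset β) else {0} := by
    ext x
    simp only [mem_filter, mem_univ, true_and, Finset.ext_iff, Fintype.mem_piFinset]
    refine forall_congr' fun i => ?_
    split_ifs <;> simp [*]
  rw [hpi, Fintype.card_piFinset]
  simp [apply_ite, card_compl, prod_ite_mem]

theorem card_filter_hammingNorm_eq (k : ℕ) :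
    #{x : ι → β | hammingNorm x = k} = (Fintype.card ι).choose k * (Fintype.card β - 1) ^ k := by
  rw [card_eq_sum_card_fiberwise (f := fun x : ι → β => ({i | x i ≠ 0} : Finset ι))
    (t := powersetCard k univ)]
  · rw [← card_univ, ← card_powersetCard, card_eq_sum_ones, sum_mul, one_mul]
    refine sum_congr rfl fun s hs => ?_
    rw [(mem_powersetCard.1 hs).2.symm, ← card_filter_support_eq s, filter_filter]
    congr 1
    exact filter_congr fun x _ => ⟨And.right, fun h => ⟨by rw [hammingNorm, h], h⟩⟩
  · intro x hx
    simpa [mem_powersetCard, hammingNorm] using hx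

theorem card_filter_hammingNorm_le (t : ℕ) :
    #{x : ι → β | hammingNorm x ≤ t}
      = ∑ k ∈ range (t + 1), (Fintype.card ι).choose k * (Fintype.card β - 1) ^ k := by
  rw [card_eq_sum_card_fiberwise (f := hammingNorm) (t := range (t + 1))]
  · refine sum_congr rfl fun k hk => ?_
    rw [← card_filter_hammingNorm_eq, filter_filter]
    exact congrArg card <| filter_congr fun x _ => ⟨And.right, fun h => ⟨by
      rw [h]; exact Nat.lt_succ_iff.1 (mem_range.1 hk), h⟩⟩
  · intro x hx
    simpa [Nat.lt_succ_iff] using hx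

end HammingBall

theorem sum_range_choose_mul_pow_mul_le {c δ : ℝ} (hδ₀ : 0 ≤ δ) (hδ₁ : δ ≤ 1)
    (hδc : δ ≤ c * (1 - δ)) {k n : ℕ} (hkn : k ≤ n) :
    (∑ i ∈ range (k + 1), (n.choose i : ℝ) * c ^ i) * (δ ^ k * (1 - δ) ^ (n - k)) ≤ c ^ k := by
  have hc : 0 ≤ c := by
    by_contra! hc
    nlinarith [mul_nonneg (neg_nonneg.2 hc.le) (sub_nonneg.2 hδ₁)]
  have hterm : ∀ i ≤ k,
      c ^ i * (δ ^ k * (1 - δ) ^ (n - k)) ≤ c ^ k * (δ ^ i * (1 - δ) ^ (n - i)) := by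
    intro i hik
    obtain ⟨j, rfl⟩ := Nat.exists_eq_add_of_le hik
    have hnj : n - i = (n - (i + j)) + j := by omega
    calc c ^ i * (δ ^ (i + j) * (1 - δ) ^ (n - (i + j)))
        = c ^ i * δ ^ i * (1 - δ) ^ (n - (i + j)) * δ ^ j := by ring
      _ ≤ c ^ i * δ ^ i * (1 - δ) ^ (n - (i + j)) * (c * (1 - δ)) ^ j := by
          gcongr
      _ = c ^ (i + j) * (δ ^ i * (1 - δ) ^ (n - i)) := by rw [hnj, mul_pow]; ring
  calc (∑ i ∈ range (k + 1), (n.choose i : ℝ) * c ^ i) * (δ ^ k * (1 - δ) ^ (n - k))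
      ≤ ∑ i ∈ range (k + 1), c ^ k * (n.choose i * (δ ^ i * (1 - δ) ^ (n - i))) := by
        rw [sum_mul]
        refine sum_le_sum fun i hi => ?_
        have := hterm i (Nat.lt_succ_iff.1 (mem_range.1 hi))
        rw [mul_assoc, mul_left_comm (c ^ k)]
        gcongr
    _ ≤ ∑ i ∈ range (n + 1), c ^ k * (n.choose i * (δ ^ i * (1 - δ) ^ (n - i))) :=
        sum_le_sum_of_subset_of_nonneg (range_subset_range.2 (by omega))
          fun _ _ _ => by have := sub_nonneg.2 hδ₁; positivity
    _ = c ^ k * (δ + (1 - δ)) ^ n := by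
        rw [add_pow, mul_sum]
        exact sum_congr rfl fun i _ => by ring
    _ = c ^ k := by rw [add_sub_cancel, one_pow, mul_one]

theorem Real.rpow_natCast_mul_logb {b x : ℝ} (hb : 0 < b) (hb₁ : b ≠ 1) (hx : 0 < x) (j : ℕ) :
    b ^ (j * Real.logb b x) = x ^ j := by
  rw [mul_comm, Real.rpow_mul hb.le, Real.rpow_logb hb hb₁ hx, Real.rpow_natCast]

theorem rpow_mul_qaryEntropy_mul {q n k : ℕ} (hq : 1 < q) (hk : 0 < k) (hkn : k < n) :
    (q : ℝ) ^ (n * qaryEntropy q (k / n)) * ((k / n) ^ k * (1 - k / n) ^ (n - k))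
      = ((q : ℝ) - 1) ^ k := by
  have hq₁ : (1 : ℝ) < q := by exact_mod_cast hq
  have hn : (0 : ℝ) < n := by exact_mod_cast hk.trans hkn
  have hkn' : (k : ℝ) < n := by exact_mod_cast hkn
  set δ : ℝ := k / n
  have hδ : 0 < δ := by positivity
  have hδ₁ : 0 < 1 - δ := by rw [sub_pos, div_lt_one hn]; exact hkn'
  have hexp : n * qaryEntropy q δ
      = k * Real.logb q ((q : ℝ) - 1) - k * Real.logb q δ
          - ((n - k : ℕ) : ℝ) * Real.logb q (1 - δ) := by
    have : (n : ℝ) * δ = k := mul_div_cancel₀ _ hn.ne'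
    rw [qaryEntropy, Nat.cast_sub hkn.le, ← this]
    ring
  have hq₀ : (0 : ℝ) < q := by linarith
  rw [hexp, Real.rpow_sub hq₀, Real.rpow_sub hq₀,
    Real.rpow_natCast_mul_logb hq₀ hq₁.ne' (by linarith),
    Real.rpow_natCast_mul_logb hq₀ hq₁.ne' hδ, Real.rpow_natCast_mul_logb hq₀ hq₁.ne' hδ₁]
  field_simp

theorem sum_range_choose_mul_pow_le_rpow_qaryEntropy {q n k : ℕ} (hq : 1 < q)
    (hkn : (k : ℝ) / n ≤ 1 - 1 / q) :
    ∑ i ∈ range (k + 1), (n.choose i : ℝ) * ((q : ℝ) - 1) ^ i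
      ≤ (q : ℝ) ^ (n * qaryEntropy q (k / n)) := by
  rcases Nat.eq_zero_or_pos n with rfl | hn
  · -- `k / 0 = 0` in `ℝ`, so both sides are `1`
    simp [sum_range_succ']
  rcases Nat.eq_zero_or_pos k with rfl | hk
  · simp [qaryEntropy]
  have hq₀ : (0 : ℝ) < q := by positivity
  have hn' : (0 : ℝ) < n := by exact_mod_cast hn
  have hδ : k / n ≤ ((q : ℝ) - 1) * (1 - k / n) := by
    have := mul_le_mul_of_nonneg_left hkn hq₀.le
    rw [mul_sub, mul_one_div_cancel hq₀.ne'] at this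
    linarith
  have hkn' : k < n := by
    have : (k : ℝ) / n < 1 := hkn.trans_lt (sub_lt_self _ (by positivity))
    exact_mod_cast (div_lt_one hn').1 this
  have hpos : (0 : ℝ) < (k / n) ^ k * (1 - k / n) ^ (n - k) := by
    have : (0 : ℝ) < 1 - k / n := by rw [sub_pos, div_lt_one hn']; exact_mod_cast hkn'
    positivity
  refine le_of_mul_le_mul_right ?_ hpos
  rw [rpow_mul_qaryEntropy_mul hq hk hkn']
  exact sum_range_choose_mul_pow_mul_le (by positivity)
    (div_le_one_of_le₀ (by exact_mod_cast hkn'.le) hn'.le) hδ hkn'.le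

theorem card_filter_ne_zero_and_hammingNorm_lt_lt {ι β : Type*} [Fintype ι] [DecidableEq ι]
    [Fintype β] [DecidableEq β] [Zero β] [Nontrivial β] {k : ℕ}
    (hkn : (k : ℝ) / Fintype.card ι ≤ 1 - 1 / Fintype.card β) :
    #{x : ι → β | x ≠ 0 ∧ hammingNorm x < k}
      < Fintype.card β ^ ⌈Fintype.card ι * qaryEntropy (Fintype.card β) (k / Fintype.card ι)⌉₊ := by
  have hq : 1 < Fintype.card β := Fintype.one_lt_card
  have hsub : ({x : ι → β | x ≠ 0 ∧ hammingNorm x < k} : Finset _)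
      ⊂ ({x | hammingNorm x ≤ k} : Finset _) := by
    refine (ssubset_iff_of_subset fun x hx => ?_).2 ⟨0, by simp, by simp⟩
    simp only [mem_filter, mem_univ, true_and] at hx ⊢
    exact hx.2.le
  refine (card_lt_card hsub).trans_le ?_
  rw [card_filter_hammingNorm_le]
  have := (sum_range_choose_mul_pow_le_rpow_qaryEntropy hq hkn).trans
    (Real.rpow_le_rpow_of_exponent_le (by exact_mod_cast hq.le) (Nat.le_ceil _))
  rw [← Nat.cast_le (α := ℝ)]
  push_cast [Nat.cast_sub hq.le]
  rwa [Real.rpow_natCast] at this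

theorem AddMonoidHom.natCard_ker_mul_natCard {G H : Type*} [AddGroup G] [AddGroup H]
    (f : G →+ H) (hf : Function.Surjective f) : Nat.card f.ker * Nat.card H = Nat.card G := by
  rw [← f.ker.card_mul_index, AddSubgroup.index_ker, f.range_eq_top.2 hf, AddSubgroup.card_top]

theorem card_filter_mulVec_eq_zero_mul {F ι κ : Type*} [Field F] [Fintype F] [DecidableEq F]
    [Fintype ι] [DecidableEq ι] [Fintype κ] [DecidableEq κ] {v : κ → F} (hv : v ≠ 0) :
    #{M : Matrix ι κ F | M *ᵥ v = 0} * Fintype.card F ^ Fintype.card ι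
      = Fintype.card (Matrix ι κ F) := by
  obtain ⟨j, hj⟩ : ∃ j, v j ≠ 0 := Function.ne_iff.1 hv
  let f : Matrix ι κ F →+ (ι → F) := ((mulVecBilin F F).flip v).toAddMonoidHom
  have hf : Function.Surjective f := fun w => ⟨vecMulVec w (Pi.single j (v j)⁻¹), by
    simp [f, vecMulVec_mulVec, single_dotProduct, hj]⟩
  rw [← Fintype.card_fun, ← Nat.card_eq_fintype_card, ← Nat.card_eq_fintype_card,
    ← f.natCard_ker_mul_natCard hf, Nat.card_eq_fintype_card (α := f.ker), Fintype.card_subtype]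
  congr 2
  ext M
  simp [f]

theorem exists_forall_mulVec_ne_zero {F ι κ : Type*} [Field F] [Fintype F] [Fintype ι]
    [Fintype κ] (S : Finset (κ → F)) (hS : (0 : κ → F) ∉ S)
    (hcard : #S < Fintype.card F ^ Fintype.card ι) :
    ∃ M : Matrix ι κ F, ∀ v ∈ S, M *ᵥ v ≠ 0 := by
  classical
  set Q := Fintype.card F ^ Fintype.card ι
  set N := Fintype.card (Matrix ι κ F)
  have hcount : ∑ M : Matrix ι κ F, #{v ∈ S | M *ᵥ v = 0} < ∑ _M : Matrix ι κ F, 1 := by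
    refine Nat.lt_of_mul_lt_mul_right (a := Q) ?_
    calc (∑ M : Matrix ι κ F, #{v ∈ S | M *ᵥ v = 0}) * Q
        = ∑ v ∈ S, #{M : Matrix ι κ F | M *ᵥ v = 0} * Q := by
          rw [← sum_mul]
          exact congrArg (· * Q) (sum_card_bipartiteAbove_eq_sum_card_bipartiteBelow _)
      _ = #S * N := by
          rw [sum_congr rfl fun v hv => card_filter_mulVec_eq_zero_mul (ne_of_mem_of_not_mem hv hS),
            sum_const, smul_eq_mul]
      _ < Q * N := Nat.mul_lt_mul_of_pos_right hcard Fintype.card_pos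
      _ = (∑ _M : Matrix ι κ F, 1) * Q := by
          rw [sum_const, smul_eq_mul, mul_one, card_univ, mul_comm]
  obtain ⟨M, -, hM⟩ := exists_lt_of_sum_lt hcount
  exact ⟨M, fun v hv hMv => (Nat.lt_one_iff.1 hM).not_gt <| card_pos.2 ⟨v, mem_filter.2 ⟨hv, hMv⟩⟩⟩

theorem sparsity_eq_hammingNorm {F : Type*} [Zero F] [DecidableEq F] {n : ℕ} (x : Fin n → F) :
    sparsity x = hammingNorm x := by
  rw [sparsity, hammingNorm, Set.ncard_eq_toFinset_card']
  congr 1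
  ext i
  simp

theorem hammingNorm_sub_le {ι G : Type*} [Fintype ι] [AddGroup G] [DecidableEq G] (x y : ι → G) :
    hammingNorm (x - y) ≤ hammingNorm x + hammingNorm y := by
  classical
  refine (card_le_card fun i => ?_).trans (card_union_le _ _)
  simp only [mem_filter, mem_univ, true_and, mem_union]
  contrapose!
  rintro ⟨hx, hy⟩
  simp [hx, hy]

theorem Matrix.eq_of_mulVec_eq_of_hammingNorm_add_lt {R ι κ : Type*} [Ring R] [DecidableEq R]
    [Fintype κ] {M : Matrix ι κ R} {d : ℕ}
    (hM : ∀ v, M *ᵥ v = 0 → v ≠ 0 → d ≤ hammingNorm v) {x y : κ → R}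
    (hxy : hammingNorm x + hammingNorm y < d) (h : M *ᵥ x = M *ᵥ y) : x = y := by
  by_contra hne
  have := hM (x - y) (by rw [mulVec_sub, h, sub_self]) (sub_ne_zero.2 hne)
  have := hammingNorm_sub_le x y
  omega

theorem exists_matrix_forall_mulVec_eq_zero_le_hammingNorm {F ι : Type*} [Field F] [Fintype F]
    [DecidableEq F] [Fintype ι] {k : ℕ}
    (hkn : (k : ℝ) / Fintype.card ι ≤ 1 - 1 / Fintype.card F) :
    ∃ M : Matrix (Fin ⌈Fintype.card ι * qaryEntropy (Fintype.card F) (k / Fintype.card ι)⌉₊) ι F,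
      ∀ v, M *ᵥ v = 0 → v ≠ 0 → k ≤ hammingNorm v := by
  classical
  obtain ⟨M, hM⟩ := exists_forall_mulVec_ne_zero (ι := Fin _) _ (by simp)
    ((card_filter_ne_zero_and_hammingNorm_lt_lt hkn).trans_eq (by rw [Fintype.card_fin]))
  exact ⟨M, fun v hMv hv => not_lt.1 fun hlt => hM v (by simp [hv, hlt]) hMv⟩

theorem gv_bound_matrix_general (F : Type*) [Field F] [Fintype F] (n D : ℕ)
    (h : ((2 * D + 1 : ℕ) : ℝ) / (n : ℝ) ≤ 1 - 1 / (Fintype.card F : ℝ)) :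
    ∃ m : ℕ, m ≤ ⌈(n : ℝ) * qaryEntropy (Fintype.card F) (((2 * D + 1 : ℕ) : ℝ) / (n : ℝ))⌉₊ ∧
      ∃ M : Matrix (Fin m) (Fin n) F,
        (∀ v : Fin n → F, M.mulVec v = 0 → v ≠ 0 → 2 * D + 1 ≤ sparsity v) ∧
        (∀ x y : Fin n → F, sparsity x ≤ D → sparsity y ≤ D →
          M.mulVec x = M.mulVec y → x = y) := by
  classical
  obtain ⟨M, hM⟩ := exists_matrix_forall_mulVec_eq_zero_le_hammingNorm (ι := Fin n) (F := F)
    (by rwa [Fintype.card_fin])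
  refine ⟨_, by rw [Fintype.card_fin], M, ?_⟩
  simp only [sparsity_eq_hammingNorm]
  exact ⟨hM, fun x y hx hy => eq_of_mulVec_eq_of_hammingNorm_add_lt hM (by omega)⟩

/-- Gilbert–Varshamov-type upper bound: over a finite field `F` with `q` elements, if
`(2D+1)/n ≤ 1 − 1/q`, then there is a matrix `M ∈ F^{m×n}` with
`m ≤ ⌈n·H_q((2D+1)/n)⌉` rows all of whose nonzero kernel vectors have sparsity at least
`2D+1`; hence `M x = M y` with `‖x‖₀, ‖y‖₀ ≤ D` forces `x = y`, so `M` allows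
`Δ`-approximation of the sparsity of all vectors of sparsity at most `D`. -/
theorem gv_bound_matrix (F : Type*) [Field F] [Fintype F] (n D : ℕ) (hD : 1 ≤ D)
    (h : ((2 * D + 1 : ℕ) : ℝ) / (n : ℝ) ≤ 1 - 1 / (Fintype.card F : ℝ)) :
    ∃ m : ℕ, m ≤ ⌈(n : ℝ) * qaryEntropy (Fintype.card F) (((2 * D + 1 : ℕ) : ℝ) / (n : ℝ))⌉₊ ∧
      ∃ M : Matrix (Fin m) (Fin n) F,
        (∀ v : Fin n → F, M.mulVec v = 0 → v ≠ 0 → 2 * D + 1 ≤ sparsity v) ∧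
        (∀ x y : Fin n → F, sparsity x ≤ D → sparsity y ≤ D →
          M.mulVec x = M.mulVec y → x = y) :=
  gv_bound_matrix_general F n D h
end
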